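/- Under the same hypotheses, H₁ = H₀ + AᵀH₀(I+G₀H₀)⁻¹A equals D^H_1 + L^H_1 K^H_1 (L^H_1)ᵀ where D^H_1 = D^H_0 + D^{AᵀHGH}_0 D^A_0, L^H_1 = [L^A_{20}, D^{AᵀHGH}_0 L^A_{10}], K^H_1 = [[(L^A_{10})ᵀ D^{HGH}_0 L^A_{10}, I],[I,0]], with D^{AᵀHGH}_0 = (D^A_0)ᵀ(I+D^H_0D^G_0)⁻¹D^H_0 and D^{HGH}_0 = (I+D^H_0D^G_0)⁻¹D^H_0. -/

import Mathlib

/-!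
The push-through identity `H (I + G H)⁻¹ = (I + H G)⁻¹ H` rewrites `H₁ - H₀` as the congruence
`Aᵀ S A` with `S = (I + H G)⁻¹ H`, which is symmetric when `G` and `H` are. Expanding the
congruence of the low-rank update `A = D + L₁ L₂ᵀ` then gives the factored form directly.
-/

open Matrix

namespace Matrix

variable {m n p α : Type*} [Fintype m] [Fintype n] [DecidableEq m] [CommRing α]

theorem IsSymm.transpose_add_mul_transpose_mul_mul {S : Matrix n n α} (hS : S.IsSymm)
    (X : Matrix n p α) (U : Matrix n m α) (V : Matrix p m α) :
    (X + U * Vᵀ)ᵀ * S * (X + U * Vᵀ) =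
      Xᵀ * S * X + fromCols V (Xᵀ * S * U) *
        (Matrix.fromBlocks (Uᵀ * S * U) 1 1 0 : Matrix (m ⊕ m) (m ⊕ m) α) *
        (fromCols V (Xᵀ * S * U))ᵀ := by
  rw [transpose_fromCols, fromCols_mul_fromBlocks, fromCols_mul_fromRows]
  simp only [transpose_add, transpose_mul, transpose_transpose, hS.eq, Matrix.mul_one,
    Matrix.mul_zero, add_zero, Matrix.add_mul, Matrix.mul_add, Matrix.mul_assoc]
  abel

variable [DecidableEq n]

/-- Push-through identity. When `1 + A * B` is singular so is `1 + B * A` (Weinstein–Aronszajn),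
and both sides are `0`. -/
theorem mul_nonsing_inv_one_add_mul_comm (A : Matrix m n α) (B : Matrix n m α) :
    B * (1 + A * B)⁻¹ = (1 + B * A)⁻¹ * B := by
  by_cases hAB : IsUnit (1 + A * B).det
  · have hBA : IsUnit (1 + B * A).det := by rwa [det_one_add_mul_comm]
    have hswap : (1 + B * A) * B = B * (1 + A * B) := by
      rw [Matrix.add_mul, Matrix.mul_add, Matrix.one_mul, Matrix.mul_one, Matrix.mul_assoc]
    calc B * (1 + A * B)⁻¹
        = (1 + B * A)⁻¹ * ((1 + B * A) * B) * (1 + A * B)⁻¹ := by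
          rw [← Matrix.mul_assoc, nonsing_inv_mul _ hBA, Matrix.one_mul]
      _ = (1 + B * A)⁻¹ * B := by
          rw [hswap, ← Matrix.mul_assoc, Matrix.mul_assoc, mul_nonsing_inv _ hAB, Matrix.mul_one]
  · have hBA : ¬IsUnit (1 + B * A).det := by rwa [det_one_add_mul_comm]
    rw [nonsing_inv_apply_not_isUnit _ hAB, nonsing_inv_apply_not_isUnit _ hBA,
      Matrix.mul_zero, Matrix.zero_mul]

theorem IsSymm.nonsing_inv_one_add_mul_mul {A B : Matrix n n α} (hA : A.IsSymm)
    (hB : B.IsSymm) : ((1 + B * A)⁻¹ * B).IsSymm := by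
  rw [IsSymm, transpose_mul, transpose_nonsing_inv, transpose_add, transpose_mul, hA.eq, hB.eq,
    transpose_one, mul_nonsing_inv_one_add_mul_comm]

end Matrix

theorem fsda_H1_general {N m : ℕ} (DA DG DH : Matrix (Fin N) (Fin N) ℝ)
    (L10 L20 : Matrix (Fin N) (Fin m) ℝ)
    (hDG : DG.IsSymm) (hDH : DH.IsSymm) :
    DH + (DA + L10 * L20ᵀ)ᵀ * DH * (1 + DG * DH)⁻¹ * (DA + L10 * L20ᵀ) =
      (DH + (DAᵀ * ((1 + DH * DG)⁻¹ * DH)) * DA) +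
        fromCols L20 ((DAᵀ * ((1 + DH * DG)⁻¹ * DH)) * L10) *
          (fromBlocks (L10ᵀ * ((1 + DH * DG)⁻¹ * DH) * L10) 1 1 0 :
            Matrix (Fin m ⊕ Fin m) (Fin m ⊕ Fin m) ℝ) *
          (fromCols L20 ((DAᵀ * ((1 + DH * DG)⁻¹ * DH)) * L10))ᵀ := by
  rw [Matrix.mul_assoc _ DH, mul_nonsing_inv_one_add_mul_comm,
    (hDG.nonsing_inv_one_add_mul_mul hDH).transpose_add_mul_transpose_mul_mul, add_assoc]

/-- The `k = 1` FSDA factored form of `H₁`. -/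
theorem fsda_H1 {N m : ℕ} (DA DG DH : Matrix (Fin N) (Fin N) ℝ)
    (L10 L20 : Matrix (Fin N) (Fin m) ℝ)
    (hDG : DG.IsSymm) (hDH : DH.IsSymm)
    (hinv : IsUnit (1 + DG * DH).det) :
    DH + (DA + L10 * L20ᵀ)ᵀ * DH * (1 + DG * DH)⁻¹ * (DA + L10 * L20ᵀ) =
      (DH + (DAᵀ * ((1 + DH * DG)⁻¹ * DH)) * DA) +
        fromCols L20 ((DAᵀ * ((1 + DH * DG)⁻¹ * DH)) * L10) *
          (fromBlocks (L10ᵀ * ((1 + DH * DG)⁻¹ * DH) * L10) 1 1 0 :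
            Matrix (Fin m ⊕ Fin m) (Fin m ⊕ Fin m) ℝ) *
          (fromCols L20 ((DAᵀ * ((1 + DH * DG)⁻¹ * DH)) * L10))ᵀ :=
  fsda_H1_general DA DG DH L10 L20 hDG hDH
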